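/- For a partition λ inside an n×m board and fixed k ≤ n ≤ m: [m−n+1] · ∑_{i=1}^{n} q^{i−1} H_k^{m,n−1}(λ∖row_i) = H_k^{m,n}(λ)·q^k[n−k] + H_{k+1}^{m,n}(λ)·[k+1], where λ∖row_i is λ with its i-th row removed. -/
import Mathlib


open Finset

noncomputable section
open scoped Classical

variable {K : Type*} [Field K]

/-- The `q`-integer `[x] = (1 - q^x)/(1 - q)` for an integer `x`. -/
def qInt (q : K) (x : ℤ) : K := (1 - q ^ x) / (1 - q)

/-- The falling `q`-factorial `[x]_j = [x][x-1]⋯[x-j+1]`. -/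
def qFall (q : K) (x : ℤ) (j : ℕ) : K := ∏ t ∈ Finset.range j, qInt q (x - t)

/-- The `q`-factorial `[n]! = [n]_n`. -/
def qFact (q : K) (n : ℕ) : K := qFall q (n : ℤ) n

/-- The Gaussian (`q`-)binomial coefficient `[a]!/([b]! [a-b]!)`. -/
def qBinom (q : K) (a b : ℕ) : K := qFact q a / (qFact q b * qFact q (a - b))

/-- The cells of the Ferrers board of `lam` (1-indexed rows `1,…,ℓ`):
cell `(i,j)` with `1 ≤ i ≤ ℓ` and `1 ≤ j ≤ lam i`. -/
def board (lam : ℕ → ℕ) (ℓ : ℕ) : Finset (ℕ × ℕ) :=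
  ((Finset.Icc 1 ℓ) ×ˢ (Finset.Icc 1 ((Finset.Icc 1 ℓ).sup lam))).filter
    (fun c => c.2 ≤ lam c.1)

/-- Placements of `k` non-attacking rooks on the Ferrers board of `lam`. -/
def placements (lam : ℕ → ℕ) (ℓ k : ℕ) : Finset (Finset (ℕ × ℕ)) :=
  (board lam ℓ).powerset.filter
    (fun p => p.card = k ∧ ∀ a ∈ p, ∀ b ∈ p, a ≠ b → a.1 ≠ b.1 ∧ a.2 ≠ b.2)

/-- The Garsia–Remmel inversion statistic of a rook placement `p`: the number of
cells of the board that are not occupied by a rook and not directly west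
(same row, with a rook strictly to the east) or north (same column, with a rook
strictly to the south) of a rook. -/
def rInv (lam : ℕ → ℕ) (ℓ : ℕ) (p : Finset (ℕ × ℕ)) : ℕ :=
  ((board lam ℓ).filter (fun c => c ∉ p ∧
      (∀ r ∈ p, r.1 = c.1 → r.2 < c.2) ∧
      (∀ r ∈ p, r.2 = c.2 → r.1 < c.1))).card

/-- The Garsia–Remmel `q`-rook number `R_k(λ) = ∑_p q^{inv(p)}`. -/
def qRook (q : K) (lam : ℕ → ℕ) (ℓ k : ℕ) : K :=
  ∑ p ∈ placements lam ℓ k, q ^ rInv lam ℓ p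

/-- The size `|λ| = λ_1 + ⋯ + λ_ℓ`. -/
def pSize (lam : ℕ → ℕ) (ℓ : ℕ) : ℕ := ∑ i ∈ Finset.Icc 1 ℓ, lam i

/-- The `q`-hit numbers `H_k^{m,n}(λ)` of `λ ⊆ n×m`, defined from the `q`-rook
numbers by the change of basis
`H_k^{m,n}(λ) = (q^{C(k,2)-|λ|}/[m-n]!) ∑_{i=k}^{n} R_i(λ) [m-i]! qbinom(i,k) (-1)^{i+k} q^{mi-C(i,2)}`. -/
def qHit (q : K) (m n : ℕ) (lam : ℕ → ℕ) (ℓ k : ℕ) : K :=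
  (q ^ ((k.choose 2 : ℤ) - (pSize lam ℓ : ℤ)) / qFact q (m - n)) *
    ∑ i ∈ Finset.Icc k n, qRook q lam ℓ i * qFact q (m - i) * qBinom q i k *
      (-1 : K) ^ (i + k) * q ^ ((m : ℤ) * (i : ℤ) - (i.choose 2 : ℤ))

/-- `lam : ℕ → ℕ` is a partition with exactly `ℓ` (positive) parts `lam 1 ≥ ⋯ ≥ lam ℓ ≥ 1`. -/
def IsPartition (lam : ℕ → ℕ) (ℓ : ℕ) : Prop :=
  (∀ i j, 1 ≤ i → i ≤ j → lam j ≤ lam i) ∧ (∀ i, ℓ < i → lam i = 0) ∧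
    (∀ i, 1 ≤ i → i ≤ ℓ → 1 ≤ lam i)

/-- `lam` is a partition with `ℓ` parts contained in an `n × m` board. -/
def IsPartitionIn (lam : ℕ → ℕ) (ℓ n m : ℕ) : Prop :=
  IsPartition lam ℓ ∧ ℓ ≤ n ∧ lam 1 ≤ m

/-- The rectangular partition `a^b` (`b` parts equal to `a`). -/
def rect (a b : ℕ) : ℕ → ℕ := fun i => if 1 ≤ i ∧ i ≤ b then a else 0

/-- The partition obtained from `lam` by deleting its `j`-th column. -/
def delCol (lam : ℕ → ℕ) (j : ℕ) : ℕ → ℕ :=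
  fun r => if j ≤ lam r then lam r - 1 else lam r

/-- The partition obtained from `lam` by deleting its `i`-th row. -/
def delRow (lam : ℕ → ℕ) (i : ℕ) : ℕ → ℕ :=
  fun r => if r < i then lam r else lam (r + 1)

/-- The `j`-th column length `λ'_j` of `lam` (with `ℓ` rows). -/
def conjP (lam : ℕ → ℕ) (ℓ j : ℕ) : ℕ :=
  ((Finset.Icc 1 ℓ).filter (fun r => j ≤ lam r)).card


section AuxLemmas

variable (q : K)

lemma one_sub_q_ne (hq1 : ∀ j : ℕ, 0 < j → q ^ j ≠ 1) : (1 : K) - q ≠ 0 := by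
  have h := hq1 1 one_pos
  rw [pow_one] at h
  exact sub_ne_zero.mpr (Ne.symm h)

lemma qInt_natCast_ne_zero (hq1 : ∀ j : ℕ, 0 < j → q ^ j ≠ 1) {j : ℕ} (hj : 0 < j) :
    qInt q (j : ℤ) ≠ 0 := by
  rw [qInt, zpow_natCast]
  exact div_ne_zero (sub_ne_zero.mpr (Ne.symm (hq1 j hj))) (one_sub_q_ne q hq1)

lemma qFact_ne_zero (hq1 : ∀ j : ℕ, 0 < j → q ^ j ≠ 1) (s : ℕ) : qFact q s ≠ 0 := by
  rw [qFact, qFall]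
  rw [Finset.prod_ne_zero_iff]
  intro t ht
  rw [Finset.mem_range] at ht
  have h1 : ((s : ℤ) - t) = ((s - t : ℕ) : ℤ) := by omega
  rw [h1]
  exact qInt_natCast_ne_zero q hq1 (by omega)

lemma qFact_succ (s : ℕ) : qFact q (s + 1) = qInt q ((s : ℤ) + 1) * qFact q s := by
  rw [qFact, qFact, qFall, qFall, Finset.prod_range_succ', mul_comm]
  congr 1
  apply Finset.prod_congr rfl
  intro t ht
  congr 1
  omega

lemma qInt_zero : qInt q 0 = 0 := by
  simp [qInt]

lemma qInt_sub (hq0 : q ≠ 0) (a b : ℤ) :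
    qInt q a - qInt q b = q ^ b * qInt q (a - b) := by
  rw [qInt, qInt, qInt, div_sub_div_same, ← mul_div_assoc]
  congr 1
  have : q ^ a = q ^ b * q ^ (a - b) := by
    rw [← zpow_add₀ hq0]; congr 1; ring
  rw [this]; ring

lemma qInt_eq_geom (h1 : (1 : K) - q ≠ 0) (s : ℕ) :
    qInt q (s : ℤ) = ∑ t ∈ Finset.range s, q ^ t := by
  have hq : q ≠ 1 := fun h => h1 (by rw [h]; ring)
  rw [qInt, zpow_natCast, geom_sum_eq hq]
  rw [div_eq_div_iff h1 (sub_ne_zero.mpr hq)]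
  ring

lemma sum_pow_count (T : Finset ℕ) :
    ∑ i ∈ T, q ^ (T.filter (· < i)).card = ∑ t ∈ Finset.range T.card, q ^ t := by
  suffices H : ∀ (c : ℕ) (T : Finset ℕ), T.card = c →
      ∑ i ∈ T, q ^ (T.filter (· < i)).card = ∑ t ∈ Finset.range T.card, q ^ t by
    exact H T.card T rfl
  intro c
  induction c with
  | zero =>
    intro T h
    rw [Finset.card_eq_zero] at h
    subst h; simp
  | succ c ih =>
    intro T h
    have hne : T.Nonempty := Finset.card_pos.mp (by omega)
    set M := T.max' hne with hM
    have hMT : M ∈ T := T.max'_mem hne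
    have h1 : T.filter (· < M) = T.erase M := by
      ext x
      simp only [Finset.mem_filter, Finset.mem_erase]
      constructor
      · rintro ⟨hx, hlt⟩; exact ⟨by omega, hx⟩
      · rintro ⟨hx, hxT⟩
        exact ⟨hxT, lt_of_le_of_ne (T.le_max' x hxT) hx⟩
    have h2 : ∀ x ∈ T.erase M, T.filter (· < x) = (T.erase M).filter (· < x) := by
      intro x hx
      have hxT := Finset.mem_of_mem_erase hx
      have hxM : x ≤ M := T.le_max' x hxT
      ext y
      simp only [Finset.mem_filter, Finset.mem_erase]
      constructor
      · rintro ⟨hy, hlt⟩; exact ⟨⟨by omega, hy⟩, hlt⟩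
      · rintro ⟨⟨_, hy⟩, hlt⟩; exact ⟨hy, hlt⟩
    have hce : (T.erase M).card = c := by rw [Finset.card_erase_of_mem hMT]; omega
    calc ∑ i ∈ T, q ^ (T.filter (· < i)).card
        = ∑ i ∈ T.erase M, q ^ (T.filter (· < i)).card + q ^ (T.filter (· < M)).card :=
          (Finset.sum_erase_add T _ hMT).symm
      _ = ∑ i ∈ T.erase M, q ^ ((T.erase M).filter (· < i)).card + q ^ c := by
          rw [h1, hce]
          congr 1
          apply Finset.sum_congr rfl
          intro x hx; rw [h2 x hx]
      _ = ∑ t ∈ Finset.range c, q ^ t + q ^ c := by rw [ih _ hce, hce]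
      _ = ∑ t ∈ Finset.range (c + 1), q ^ t := (Finset.sum_range_succ _ _).symm
    rw [h]

end AuxLemmas


section Comb

/-- insert a gap at row `i` -/
def insR (i : ℕ) (c : ℕ × ℕ) : ℕ × ℕ := (if c.1 < i then c.1 else c.1 + 1, c.2)

/-- delete row `i` (shift rows above down) -/
def delR (i : ℕ) (c : ℕ × ℕ) : ℕ × ℕ := (if c.1 < i then c.1 else c.1 - 1, c.2)

lemma insR_snd (i : ℕ) (c : ℕ × ℕ) : (insR i c).2 = c.2 := rfl

lemma delR_snd (i : ℕ) (c : ℕ × ℕ) : (delR i c).2 = c.2 := rfl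

lemma insR_fst_lt_iff (i : ℕ) (a b : ℕ × ℕ) : (insR i a).1 < (insR i b).1 ↔ a.1 < b.1 := by
  simp only [insR]; split_ifs <;> omega

lemma insR_fst_eq_iff (i : ℕ) (a b : ℕ × ℕ) : (insR i a).1 = (insR i b).1 ↔ a.1 = b.1 := by
  simp only [insR]; split_ifs <;> omega

lemma insR_inj (i : ℕ) : Function.Injective (insR i) := by
  intro a b h
  have h1 : (insR i a).1 = (insR i b).1 := by rw [h]
  have h2 := (insR_fst_eq_iff i a b).mp h1
  have h3 : a.2 = b.2 := by
    have := congrArg Prod.snd h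
    simpa [insR] using this
  exact Prod.ext h2 h3

lemma delR_insR (i : ℕ) (c : ℕ × ℕ) : delR i (insR i c) = c := by
  apply Prod.ext
  · simp only [insR, delR]; split_ifs <;> omega
  · rfl

lemma insR_delR {i : ℕ} {c : ℕ × ℕ} (h : c.1 ≠ i) : insR i (delR i c) = c := by
  apply Prod.ext
  · simp only [insR, delR]; split_ifs <;> omega
  · rfl

lemma insR_fst_ne {i : ℕ} (c : ℕ × ℕ) : (insR i c).1 ≠ i := by
  simp only [insR]; split_ifs <;> omega

lemma mem_board {lam : ℕ → ℕ} {ℓ : ℕ} {c : ℕ × ℕ} :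
    c ∈ board lam ℓ ↔ 1 ≤ c.1 ∧ c.1 ≤ ℓ ∧ 1 ≤ c.2 ∧ c.2 ≤ lam c.1 := by
  unfold board
  simp only [Finset.mem_filter, Finset.mem_product, Finset.mem_Icc]
  constructor
  · rintro ⟨⟨⟨h1, h2⟩, h3, h4⟩, h5⟩
    exact ⟨h1, h2, h3, h5⟩
  · rintro ⟨h1, h2, h3, h5⟩
    refine ⟨⟨⟨h1, h2⟩, h3, ?_⟩, h5⟩
    exact le_trans h5 (Finset.le_sup (Finset.mem_Icc.mpr ⟨h1, h2⟩))

lemma insR_mem_board {lam : ℕ → ℕ} {ℓ i : ℕ} (hpart : IsPartition lam ℓ)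
    {c : ℕ × ℕ} (hc : c ∈ board (delRow lam i) ℓ) : insR i c ∈ board lam ℓ := by
  rw [mem_board] at hc ⊢
  obtain ⟨h1, h2, h3, h4⟩ := hc
  simp only [insR]
  split_ifs with h
  · simp only [delRow, if_pos h] at h4
    exact ⟨h1, h2, h3, h4⟩
  · simp only [delRow, if_neg h] at h4
    refine ⟨by omega, ?_, h3, h4⟩
    by_contra hle
    have := hpart.2.1 (c.1 + 1) (by omega)
    omega

lemma delR_mem_board {lam : ℕ → ℕ} {ℓ i : ℕ} (hi : 1 ≤ i)
    {c : ℕ × ℕ} (hc : c ∈ board lam ℓ) (hne : c.1 ≠ i) :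
    delR i c ∈ board (delRow lam i) ℓ := by
  rw [mem_board] at hc ⊢
  obtain ⟨h1, h2, h3, h4⟩ := hc
  simp only [delR]
  split_ifs with h
  · simp only [delRow, if_pos h]
    exact ⟨h1, h2, h3, h4⟩
  · have hgt : i < c.1 := by omega
    simp only [delRow]
    rw [if_neg (by omega)]
    have : c.1 - 1 + 1 = c.1 := by omega
    rw [this]
    exact ⟨by omega, by omega, h3, h4⟩

lemma board_delRow_image {lam : ℕ → ℕ} {ℓ i : ℕ} (hpart : IsPartition lam ℓ) (hi : 1 ≤ i) :
    (board (delRow lam i) ℓ).image (insR i) = (board lam ℓ).filter (fun c => ¬ c.1 = i) := by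
  ext c
  simp only [Finset.mem_image, Finset.mem_filter]
  constructor
  · rintro ⟨a, ha, rfl⟩
    exact ⟨insR_mem_board hpart ha, insR_fst_ne a⟩
  · rintro ⟨hc, hne⟩
    exact ⟨delR i c, delR_mem_board hi hc hne, insR_delR hne⟩

lemma mem_placements {lam : ℕ → ℕ} {ℓ j : ℕ} {p : Finset (ℕ × ℕ)} :
    p ∈ placements lam ℓ j ↔ p ⊆ board lam ℓ ∧ p.card = j ∧
      ∀ a ∈ p, ∀ b ∈ p, a ≠ b → a.1 ≠ b.1 ∧ a.2 ≠ b.2 := by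
  simp [placements, Finset.mem_filter, Finset.mem_powerset, and_assoc]

end Comb


section Comb2

variable {lam : ℕ → ℕ} {ℓ i j : ℕ}

lemma image_insR_placements (hpart : IsPartition lam ℓ) (hi : 1 ≤ i)
    {p : Finset (ℕ × ℕ)} (hp : p ∈ placements (delRow lam i) ℓ j) :
    p.image (insR i) ∈ placements lam ℓ j ∧ ∀ r ∈ p.image (insR i), r.1 ≠ i := by
  rw [mem_placements] at hp
  obtain ⟨hsub, hcard, hpair⟩ := hp
  refine ⟨mem_placements.mpr ⟨?_, ?_, ?_⟩, ?_⟩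
  · intro c hc
    rw [Finset.mem_image] at hc
    obtain ⟨a, ha, rfl⟩ := hc
    exact insR_mem_board hpart (hsub ha)
  · rw [Finset.card_image_of_injective _ (insR_inj i)]
    exact hcard
  · intro a ha b hb hne
    rw [Finset.mem_image] at ha hb
    obtain ⟨a', ha', rfl⟩ := ha
    obtain ⟨b', hb', rfl⟩ := hb
    have hne' : a' ≠ b' := fun h => hne (by rw [h])
    obtain ⟨h1, h2⟩ := hpair a' ha' b' hb' hne'
    exact ⟨fun h => h1 ((insR_fst_eq_iff i a' b').mp h), h2⟩
  · intro r hr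
    rw [Finset.mem_image] at hr
    obtain ⟨a, _, rfl⟩ := hr
    exact insR_fst_ne a

lemma image_delR_placements (hi : 1 ≤ i)
    {P : Finset (ℕ × ℕ)} (hP : P ∈ placements lam ℓ j) (hfree : ∀ r ∈ P, r.1 ≠ i) :
    P.image (delR i) ∈ placements (delRow lam i) ℓ j := by
  rw [mem_placements] at hP
  obtain ⟨hsub, hcard, hpair⟩ := hP
  have hinj : ∀ a ∈ P, ∀ b ∈ P, delR i a = delR i b → a = b := by
    intro a ha b hb h
    rw [← insR_delR (hfree a ha), ← insR_delR (hfree b hb), h]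
  refine mem_placements.mpr ⟨?_, ?_, ?_⟩
  · intro c hc
    rw [Finset.mem_image] at hc
    obtain ⟨a, ha, rfl⟩ := hc
    exact delR_mem_board hi (hsub ha) (hfree a ha)
  · rw [Finset.card_image_of_injOn (fun a ha b hb h => hinj a ha b hb h)]
    exact hcard
  · intro a ha b hb hne
    rw [Finset.mem_image] at ha hb
    obtain ⟨a', ha', rfl⟩ := ha
    obtain ⟨b', hb', rfl⟩ := hb
    have hne' : a' ≠ b' := fun h => hne (by rw [h])
    obtain ⟨h1, h2⟩ := hpair a' ha' b' hb' hne'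
    have ha1 := hfree a' ha'
    have hb1 := hfree b' hb'
    constructor
    · simp only [delR]
      split_ifs <;> omega
    · exact h2

lemma rInv_insR (hpart : IsPartition lam ℓ) (hi : 1 ≤ i)
    {p : Finset (ℕ × ℕ)} (hp : p ∈ placements (delRow lam i) ℓ j) :
    rInv lam ℓ (p.image (insR i)) + ((p.image (insR i)).filter (fun r => i < r.1)).card
      = rInv (delRow lam i) ℓ p + lam i := by
  obtain ⟨hPmem, hPfree⟩ := image_insR_placements hpart hi hp
  obtain ⟨hPsub, hPcard, hPpair⟩ := mem_placements.mp hPmem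
  set P := p.image (insR i) with hPdef
  set C := (board lam ℓ).filter (fun c => c ∉ P ∧
      (∀ r ∈ P, r.1 = c.1 → r.2 < c.2) ∧ (∀ r ∈ P, r.2 = c.2 → r.1 < c.1)) with hC
  have hsplitC : (C.filter (fun c => c.1 = i)).card + (C.filter (fun c => ¬ c.1 = i)).card
      = C.card := Finset.card_filter_add_card_filter_not (fun c : ℕ × ℕ => c.1 = i)
  have partA : C.filter (fun c => ¬ c.1 = i)
      = ((board (delRow lam i) ℓ).filter (fun c => c ∉ p ∧
          (∀ r ∈ p, r.1 = c.1 → r.2 < c.2) ∧ (∀ r ∈ p, r.2 = c.2 → r.1 < c.1))).image (insR i) := by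
    rw [hC, Finset.filter_comm, ← board_delRow_image hpart hi, Finset.filter_image]
    congr 1
    apply Finset.filter_congr
    intro c hc
    constructor
    · rintro ⟨hnot, hrow, hcol⟩
      refine ⟨fun hcp => hnot (Finset.mem_image_of_mem _ hcp), ?_, ?_⟩
      · intro r hr hr1
        have := hrow (insR i r) (Finset.mem_image_of_mem _ hr)
          ((insR_fst_eq_iff i r c).mpr hr1)
        exact this
      · intro r hr hr2
        have := hcol (insR i r) (Finset.mem_image_of_mem _ hr) hr2
        exact (insR_fst_lt_iff i r c).mp this
    · rintro ⟨hnot, hrow, hcol⟩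
      refine ⟨?_, ?_, ?_⟩
      · intro hmem
        rw [Finset.mem_image] at hmem
        obtain ⟨a, ha, haa⟩ := hmem
        exact hnot (by rwa [insR_inj i haa] at ha)
      · intro r hr hr1
        rw [Finset.mem_image] at hr
        obtain ⟨a, ha, rfl⟩ := hr
        exact hrow a ha ((insR_fst_eq_iff i a c).mp hr1)
      · intro r hr hr2
        rw [Finset.mem_image] at hr
        obtain ⟨a, ha, rfl⟩ := hr
        exact (insR_fst_lt_iff i a c).mpr (hcol a ha hr2)
  have cardA : (C.filter (fun c => ¬ c.1 = i)).card = rInv (delRow lam i) ℓ p := by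
    rw [partA, Finset.card_image_of_injective _ (insR_inj i), rInv]
  have partB : (C.filter (fun c => c.1 = i)).card + (P.filter (fun r => i < r.1)).card
      = lam i := by
    by_cases hil : i ≤ ℓ
    · set Good := (Finset.Icc 1 (lam i)).filter
        (fun x => ∀ r ∈ P, r.2 = x → r.1 < i) with hGood
      have hCi : C.filter (fun c => c.1 = i) = Good.image (fun x => (i, x)) := by
        ext c
        simp only [hC, hGood, Finset.mem_filter, Finset.mem_image, Finset.mem_Icc]
        constructor
        · rintro ⟨⟨hcB, _, _, hcol⟩, hci⟩
          have hB := mem_board.mp hcB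
          refine ⟨c.2, ⟨⟨hB.2.2.1, by rw [← hci]; exact hB.2.2.2⟩, ?_⟩, ?_⟩
          · intro r hr hr2
            rw [hci] at hcol
            exact hcol r hr hr2
          · rw [← hci]
        · rintro ⟨x, ⟨⟨hx1, hx2⟩, hgood⟩, rfl⟩
          refine ⟨⟨mem_board.mpr ⟨hi, hil, hx1, hx2⟩, ?_, ?_, ?_⟩, rfl⟩
          · intro hmem
            exact hPfree _ hmem rfl
          · intro r hr hr1
            exact absurd hr1 (hPfree r hr)
          · intro r hr hr2
            exact hgood r hr hr2
      have hGoodcard : (C.filter (fun c => c.1 = i)).card = Good.card := by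
        rw [hCi, Finset.card_image_of_injective]
        intro a b h
        exact (Prod.mk.injEq _ _ _ _).mp h |>.2
      set Bad := (Finset.Icc 1 (lam i)).filter
        (fun x => ¬ ∀ r ∈ P, r.2 = x → r.1 < i) with hBad
      have hGB : Good.card + Bad.card = lam i := by
        have h5 := Finset.card_filter_add_card_filter_not
          (s := Finset.Icc 1 (lam i)) (p := fun x => ∀ r ∈ P, r.2 = x → r.1 < i)
        rw [Nat.card_Icc] at h5
        rw [← hGood, ← hBad] at h5
        omega
      have hBadeq : Bad = (P.filter (fun r => i < r.1)).image Prod.snd := by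
        ext x
        simp only [hBad, Finset.mem_filter, Finset.mem_image, Finset.mem_Icc]
        constructor
        · rintro ⟨hx, hbad⟩
          push_neg at hbad
          obtain ⟨r, hr, hr2, hr1⟩ := hbad
          refine ⟨r, ⟨hr, ?_⟩, hr2⟩
          have := hPfree r hr
          omega
        · rintro ⟨r, ⟨hr, hir⟩, rfl⟩
          have hB := mem_board.mp (hPsub hr)
          have hle : lam r.1 ≤ lam i := hpart.1 i r.1 hi (le_of_lt hir)
          refine ⟨⟨hB.2.2.1, le_trans hB.2.2.2 hle⟩, ?_⟩
          push_neg
          exact ⟨r, hr, rfl, by omega⟩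
      have hBadcard : Bad.card = (P.filter (fun r => i < r.1)).card := by
        rw [hBadeq]
        apply Finset.card_image_of_injOn
        intro a ha b hb h
        have ha' := Finset.mem_of_mem_filter a ha
        have hb' := Finset.mem_of_mem_filter b hb
        by_contra hne
        exact (hPpair a ha' b hb' hne).2 h
      omega
    · have h0 : lam i = 0 := hpart.2.1 i (by omega)
      have hC0 : C.filter (fun c => c.1 = i) = ∅ := by
        rw [Finset.filter_eq_empty_iff]
        intro c hc
        have := mem_board.mp (Finset.mem_of_mem_filter c (hC ▸ hc))
        omega
      have hP0 : P.filter (fun r => i < r.1) = ∅ := by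
        rw [Finset.filter_eq_empty_iff]
        intro r hr
        have := mem_board.mp (hPsub hr)
        omega
      rw [hC0, hP0, h0]
      simp
  have : rInv lam ℓ P = C.card := rfl
  omega

lemma key_i (q : K) (hpart : IsPartition lam ℓ) (hi : 1 ≤ i) :
    q ^ (lam i + i - 1) * qRook q (delRow lam i) ℓ j
      = ∑ P ∈ (placements lam ℓ j).filter (fun P => ∀ r ∈ P, r.1 ≠ i),
          q ^ (rInv lam ℓ P + (i - 1) + (P.filter (fun r => i < r.1)).card) := by
  rw [qRook, Finset.mul_sum]
  apply Finset.sum_nbij' (i := fun p => p.image (insR i)) (j := fun P => P.image (delR i))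
  · intro p hp
    rw [Finset.mem_filter]
    exact ⟨(image_insR_placements hpart hi hp).1, (image_insR_placements hpart hi hp).2⟩
  · intro P hP
    rw [Finset.mem_filter] at hP
    exact image_delR_placements hi hP.1 hP.2
  · intro p _
    rw [Finset.image_image]
    have : delR i ∘ insR i = id := funext (delR_insR i)
    rw [this, Finset.image_id]
  · intro P hP
    rw [Finset.mem_filter] at hP
    rw [Finset.image_image]
    have : ∀ r ∈ P, (insR i ∘ delR i) r = id r := fun r hr => insR_delR (hP.2 r hr)
    rw [Finset.image_congr (fun r hr => this r hr), Finset.image_id]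
  · intro p hp
    have h2 := rInv_insR hpart hi hp
    rw [← pow_add]
    congr 1
    omega

lemma step2 (q : K) (h1 : (1 : K) - q ≠ 0) {n : ℕ} (hln : ℓ ≤ n) (hjn : j < n)
    {P : Finset (ℕ × ℕ)} (hP : P ∈ placements lam ℓ j) :
    ∑ x ∈ (Finset.Icc 1 n).filter (fun x => ∀ r ∈ P, r.1 ≠ x),
        q ^ ((x - 1) + (P.filter (fun r => x < r.1)).card)
      = q ^ j * qInt q ((n : ℤ) - (j : ℤ)) := by
  obtain ⟨hsub, hcard, hpair⟩ := mem_placements.mp hP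
  set R := P.image Prod.fst with hR
  have hfstinj : Set.InjOn Prod.fst (P : Set (ℕ × ℕ)) := by
    intro a ha b hb h
    by_contra hne
    exact (hpair a ha b hb hne).1 h
  have hRcard : R.card = j := by rw [hR, Finset.card_image_of_injOn hfstinj, hcard]
  have hRsub : R ⊆ Finset.Icc 1 n := by
    intro x hx
    rw [hR, Finset.mem_image] at hx
    obtain ⟨r, hr, rfl⟩ := hx
    have := mem_board.mp (hsub hr)
    rw [Finset.mem_Icc]
    omega
  have hfilter : (Finset.Icc 1 n).filter (fun x => ∀ r ∈ P, r.1 ≠ x)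
      = Finset.Icc 1 n \ R := by
    ext x
    simp only [Finset.mem_filter, Finset.mem_sdiff, hR, Finset.mem_image]
    constructor
    · rintro ⟨hx, hall⟩
      refine ⟨hx, ?_⟩
      rintro ⟨r, hr, rfl⟩
      exact hall r hr rfl
    · rintro ⟨hx, hnex⟩
      exact ⟨hx, fun r hr h => hnex ⟨r, hr, h⟩⟩
  rw [hfilter]
  set T := Finset.Icc 1 n \ R with hT
  have hTcard : T.card = n - j := by
    rw [hT, Finset.card_sdiff_of_subset hRsub, hRcard, Nat.card_Icc]
    omega
  have hexp : ∀ x ∈ T, (x - 1) + (P.filter (fun r => x < r.1)).card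
      = j + (T.filter (· < x)).card := by
    intro x hx
    have hx' := hx
    rw [hT, Finset.mem_sdiff, Finset.mem_Icc] at hx'
    obtain ⟨⟨hx1, hxn⟩, hxR⟩ := hx'
    have hb : (P.filter (fun r => x < r.1)).card = (R.filter (fun y => x < y)).card := by
      have himg : R.filter (fun y => x < y) = (P.filter (fun r => x < r.1)).image Prod.fst := by
        rw [hR, Finset.filter_image]
      rw [himg]
      symm
      apply Finset.card_image_of_injOn
      exact Set.InjOn.mono (Finset.coe_subset.mpr (Finset.filter_subset _ _)) hfstinj
    have h1c : ((Finset.Icc 1 n).filter (· < x)).card = x - 1 := by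
      have he : (Finset.Icc 1 n).filter (· < x) = Finset.Icc 1 (x - 1) := by
        ext y
        simp only [Finset.mem_filter, Finset.mem_Icc]
        omega
      rw [he, Nat.card_Icc]
      omega
    have hsplit : ((Finset.Icc 1 n).filter (· < x)).card
        = (R.filter (· < x)).card + (T.filter (· < x)).card := by
      have hU : Finset.Icc 1 n = R ∪ T := by
        rw [hT, Finset.union_sdiff_of_subset hRsub]
      rw [hU, Finset.filter_union, Finset.card_union_of_disjoint]
      exact Finset.disjoint_filter_filter Finset.sdiff_disjoint.symm
    have hRx : (R.filter (· < x)).card + (R.filter (fun y => x < y)).card = j := by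
      have hkey := Finset.card_filter_add_card_filter_not
        (s := R) (p := fun y => y < x)
      have hcongr : R.filter (fun y => ¬ y < x) = R.filter (fun y => x < y) := by
        apply Finset.filter_congr
        intro y hy
        have hyx : y ≠ x := by
          rintro rfl
          exact hxR hy
        constructor <;> (intro; omega)
      rw [hcongr] at hkey
      rw [hRcard] at hkey
      omega
    omega
  calc ∑ x ∈ T, q ^ ((x - 1) + (P.filter (fun r => x < r.1)).card)
      = ∑ x ∈ T, q ^ j * q ^ (T.filter (· < x)).card := by
        apply Finset.sum_congr rfl
        intro x hx
        rw [← pow_add, hexp x hx]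
    _ = q ^ j * ∑ x ∈ T, q ^ (T.filter (· < x)).card := by rw [Finset.mul_sum]
    _ = q ^ j * ∑ t ∈ Finset.range (n - j), q ^ t := by rw [sum_pow_count, hTcard]
    _ = q ^ j * qInt q ((n : ℤ) - (j : ℤ)) := by
        rw [← qInt_eq_geom q h1, Nat.cast_sub (le_of_lt hjn)]

lemma core (q : K) (h1 : (1 : K) - q ≠ 0) {n : ℕ} (hpart : IsPartition lam ℓ)
    (hln : ℓ ≤ n) (hjn : j < n) :
    ∑ i ∈ Finset.Icc 1 n, q ^ (lam i + i - 1) * qRook q (delRow lam i) ℓ j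
      = q ^ j * qInt q ((n : ℤ) - (j : ℤ)) * qRook q lam ℓ j := by
  have step : ∀ x ∈ Finset.Icc 1 n, q ^ (lam x + x - 1) * qRook q (delRow lam x) ℓ j
      = ∑ P ∈ placements lam ℓ j, (if (∀ r ∈ P, r.1 ≠ x) then
          q ^ (rInv lam ℓ P + (x - 1) + (P.filter (fun r => x < r.1)).card) else 0) := by
    intro x hx
    rw [Finset.mem_Icc] at hx
    rw [key_i q hpart hx.1, Finset.sum_filter]
  rw [Finset.sum_congr rfl step, Finset.sum_comm]
  rw [qRook, Finset.mul_sum]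
  apply Finset.sum_congr rfl
  intro P hP
  rw [← Finset.sum_filter]
  have hstep : ∀ x ∈ (Finset.Icc 1 n).filter (fun x => ∀ r ∈ P, r.1 ≠ x),
      q ^ (rInv lam ℓ P + (x - 1) + (P.filter (fun r => x < r.1)).card)
        = q ^ (rInv lam ℓ P) * q ^ ((x - 1) + (P.filter (fun r => x < r.1)).card) := by
    intro x _
    rw [← pow_add, add_assoc]
  rw [Finset.sum_congr rfl hstep, ← Finset.mul_sum, step2 q h1 hln hjn hP]
  ring

end Comb2


section Outer

lemma pSize_delRow {lam : ℕ → ℕ} {ℓ i : ℕ} (hpart : IsPartition lam ℓ) (hi : 1 ≤ i) :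
    pSize (delRow lam i) ℓ + lam i = pSize lam ℓ := by
  by_cases hil : i ≤ ℓ
  · have hinj : ∀ x ∈ Finset.Icc 1 ℓ, ∀ y ∈ Finset.Icc 1 ℓ,
        (if x < i then x else x + 1) = (if y < i then y else y + 1) → x = y := by
      intro x _ y _ h
      split_ifs at h <;> omega
    have he : pSize (delRow lam i) ℓ
        = ∑ s ∈ (Finset.Icc 1 ℓ).image (fun r => if r < i then r else r + 1), lam s := by
      rw [Finset.sum_image hinj, pSize]
      apply Finset.sum_congr rfl
      intro r _
      simp only [delRow]
      split_ifs <;> rfl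
    have himg : (Finset.Icc 1 ℓ).image (fun r => if r < i then r else r + 1)
        = (Finset.Icc 1 (ℓ + 1)).erase i := by
      ext x
      simp only [Finset.mem_image, Finset.mem_erase, Finset.mem_Icc]
      constructor
      · rintro ⟨r, hr, rfl⟩
        split_ifs <;> omega
      · rintro ⟨hxi, hx1, hx2⟩
        refine ⟨if x < i then x else x - 1, by split_ifs <;> omega, ?_⟩
        split_ifs <;> omega
    rw [he, himg]
    have hmem : i ∈ Finset.Icc 1 (ℓ + 1) := Finset.mem_Icc.mpr ⟨hi, by omega⟩
    rw [Finset.sum_erase_add _ _ hmem]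
    rw [pSize, Finset.sum_Icc_succ_top (by omega : 1 ≤ ℓ + 1)]
    rw [hpart.2.1 (ℓ + 1) (by omega)]
    ring
  · have h0 : lam i = 0 := hpart.2.1 i (by omega)
    rw [h0, pSize, pSize, add_zero]
    apply Finset.sum_congr rfl
    intro r hr
    rw [Finset.mem_Icc] at hr
    simp only [delRow]
    rw [if_pos (by omega)]

lemma qBinom_step (q : K) (hq1 : ∀ j : ℕ, 0 < j → q ^ j ≠ 1) {x k : ℕ} (hkx : k < x) :
    qInt q ((k : ℤ) + 1) * qBinom q x (k + 1) = qInt q ((x : ℤ) - (k : ℤ)) * qBinom q x k := by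
  rw [qBinom, qBinom]
  have h1 : qFact q (k + 1) = qInt q ((k : ℤ) + 1) * qFact q k := qFact_succ q k
  have h2 : x - k = (x - (k + 1)) + 1 := by omega
  have h3 : qFact q (x - k) = qInt q ((x : ℤ) - (k : ℤ)) * qFact q (x - (k + 1)) := by
    rw [h2, qFact_succ]
    congr 2
    omega
  rw [h1, h3]
  have hk1 : qInt q ((k : ℤ) + 1) ≠ 0 := by
    have hc : ((k + 1 : ℕ) : ℤ) = (k : ℤ) + 1 := by push_cast; ring
    rw [← hc]
    exact qInt_natCast_ne_zero q hq1 (by omega)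
  have hxk : qInt q ((x : ℤ) - (k : ℤ)) ≠ 0 := by
    have hc : ((x - k : ℕ) : ℤ) = (x : ℤ) - (k : ℤ) := by omega
    rw [← hc]
    exact qInt_natCast_ne_zero q hq1 (by omega)
  have hfk := qFact_ne_zero q hq1 k
  have hfxk := qFact_ne_zero q hq1 (x - (k + 1))
  field_simp

end Outer

/-- `[m-n+1] ∑_{i=1}^{n} q^{i-1} H_k^{m,n-1}(λ∖row_i)
      = H_k^{m,n}(λ) q^k [n-k] + H_{k+1}^{m,n}(λ) [k+1]`. -/
theorem stmt11 (q : K) (hq0 : q ≠ 0) (hq1 : ∀ j : ℕ, 0 < j → q ^ j ≠ 1)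
    (m n ℓ k : ℕ) (lam : ℕ → ℕ) (hk : k ≤ n) (hnm : n ≤ m) (hn : 1 ≤ n)
    (hpart : IsPartitionIn lam ℓ n m) :
    qInt q ((m : ℤ) - n + 1) *
        ∑ i ∈ Finset.Icc 1 n, q ^ (i - 1) * qHit q m (n - 1) (delRow lam i) ℓ k =
      qHit q m n lam ℓ k * q ^ k * qInt q ((n : ℤ) - k) +
        qHit q m n lam ℓ (k + 1) * qInt q ((k : ℤ) + 1) := by
  obtain ⟨hp, hln, hlm⟩ := hpart
  have h1q : (1 : K) - q ≠ 0 := one_sub_q_ne q hq1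
  set C : ℕ → K := fun x => qFact q (m - x) * qBinom q x k * (-1 : K) ^ (x + k) *
    q ^ ((m : ℤ) * (x : ℤ) - (x.choose 2 : ℤ)) with hCdef
  set D : ℕ → K := fun x => qFact q (m - x) * qBinom q x (k + 1) * (-1 : K) ^ (x + (k + 1)) *
    q ^ ((m : ℤ) * (x : ℤ) - (x.choose 2 : ℤ)) with hDdef
  set A := q ^ ((k.choose 2 : ℤ) - (pSize lam ℓ : ℤ)) with hA
  set u := qInt q ((m : ℤ) - n + 1) with huu
  set F0 := qFact q (m - n) with hF0
  have hune : u ≠ 0 := by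
    have hc : ((m - n + 1 : ℕ) : ℤ) = (m : ℤ) - n + 1 := by omega
    rw [huu, ← hc]
    exact qInt_natCast_ne_zero q hq1 (by omega)
  have hF0ne : F0 ≠ 0 := qFact_ne_zero q hq1 _
  have hfac : qFact q (m - (n - 1)) = u * F0 := by
    have h2 : m - (n - 1) = (m - n) + 1 := by omega
    rw [h2, qFact_succ, huu, hF0]
    congr 2
    omega
  -- step 1 : rewrite each LHS summand
  have hi1 : ∀ i ∈ Finset.Icc 1 n, q ^ (i - 1) * qHit q m (n - 1) (delRow lam i) ℓ k
      = (A / (u * F0)) * (q ^ (lam i + i - 1) *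
          ∑ x ∈ Finset.Icc k (n - 1), qRook q (delRow lam i) ℓ x * C x) := by
    intro i hi
    rw [Finset.mem_Icc] at hi
    rw [qHit, hfac]
    have hps : q ^ ((k.choose 2 : ℤ) - (pSize (delRow lam i) ℓ : ℤ)) = A * q ^ (lam i) := by
      have h2 := pSize_delRow hp hi.1
      have h3 : ((k.choose 2 : ℤ) - (pSize (delRow lam i) ℓ : ℤ))
          = ((k.choose 2 : ℤ) - (pSize lam ℓ : ℤ)) + (lam i : ℤ) := by omega
      rw [h3, zpow_add₀ hq0, hA, zpow_natCast]
    rw [hps]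
    have hsum : ∑ x ∈ Finset.Icc k (n - 1), qRook q (delRow lam i) ℓ x * qFact q (m - x) *
          qBinom q x k * (-1 : K) ^ (x + k) * q ^ ((m : ℤ) * (x : ℤ) - (x.choose 2 : ℤ))
        = ∑ x ∈ Finset.Icc k (n - 1), qRook q (delRow lam i) ℓ x * C x := by
      apply Finset.sum_congr rfl
      intro x _
      rw [hCdef]
      ring
    rw [hsum]
    have hpow : q ^ (lam i + i - 1) = q ^ (lam i) * q ^ (i - 1) := by
      rw [← pow_add]
      congr 1
      omega
    rw [hpow]
    ring
  -- step 2 : swap sums and apply the core identity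
  have hswap : ∑ i ∈ Finset.Icc 1 n, q ^ (lam i + i - 1) *
        ∑ x ∈ Finset.Icc k (n - 1), qRook q (delRow lam i) ℓ x * C x
      = ∑ x ∈ Finset.Icc k (n - 1), C x *
          (q ^ x * qInt q ((n : ℤ) - (x : ℤ)) * qRook q lam ℓ x) := by
    calc ∑ i ∈ Finset.Icc 1 n, q ^ (lam i + i - 1) *
          ∑ x ∈ Finset.Icc k (n - 1), qRook q (delRow lam i) ℓ x * C x
        = ∑ i ∈ Finset.Icc 1 n, ∑ x ∈ Finset.Icc k (n - 1),
            q ^ (lam i + i - 1) * (qRook q (delRow lam i) ℓ x * C x) := by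
          apply Finset.sum_congr rfl
          intro i _
          rw [Finset.mul_sum]
      _ = ∑ x ∈ Finset.Icc k (n - 1), ∑ i ∈ Finset.Icc 1 n,
            q ^ (lam i + i - 1) * (qRook q (delRow lam i) ℓ x * C x) := Finset.sum_comm
      _ = ∑ x ∈ Finset.Icc k (n - 1), C x *
            ∑ i ∈ Finset.Icc 1 n, q ^ (lam i + i - 1) * qRook q (delRow lam i) ℓ x := by
          apply Finset.sum_congr rfl
          intro x _
          rw [Finset.mul_sum]
          apply Finset.sum_congr rfl
          intro i _
          ring
      _ = ∑ x ∈ Finset.Icc k (n - 1), C x *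
            (q ^ x * qInt q ((n : ℤ) - (x : ℤ)) * qRook q lam ℓ x) := by
          apply Finset.sum_congr rfl
          intro x hx
          rw [Finset.mem_Icc] at hx
          rw [core q h1q hp hln (by omega)]
  -- extension of the sum to `Icc k n`
  have hext : ∑ x ∈ Finset.Icc k n, C x * (q ^ x * qInt q ((n : ℤ) - (x : ℤ)) * qRook q lam ℓ x)
      = ∑ x ∈ Finset.Icc k (n - 1), C x *
          (q ^ x * qInt q ((n : ℤ) - (x : ℤ)) * qRook q lam ℓ x) := by
    have hins : Finset.Icc k n = insert n (Finset.Icc k (n - 1)) := by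
      ext y
      simp only [Finset.mem_Icc, Finset.mem_insert]
      omega
    rw [hins, Finset.sum_insert (by simp only [Finset.mem_Icc]; omega)]
    have h0 : qInt q ((n : ℤ) - (n : ℤ)) = 0 := by rw [sub_self, qInt_zero]
    rw [h0]
    ring
  have hLHS : u * ∑ i ∈ Finset.Icc 1 n, q ^ (i - 1) * qHit q m (n - 1) (delRow lam i) ℓ k
      = (A / F0) * ∑ x ∈ Finset.Icc k n, C x *
          (q ^ x * qInt q ((n : ℤ) - (x : ℤ)) * qRook q lam ℓ x) := by
    rw [Finset.sum_congr rfl hi1, ← Finset.mul_sum, hswap, hext]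
    field_simp
  -- RHS rewrites
  have hRHS1 : qHit q m n lam ℓ k
      = (A / F0) * ∑ x ∈ Finset.Icc k n, qRook q lam ℓ x * C x := by
    rw [qHit, ← hA, ← hF0]
    congr 1
    apply Finset.sum_congr rfl
    intro x _
    rw [hCdef]
    ring
  have hchoose : q ^ (((k + 1).choose 2 : ℤ) - (pSize lam ℓ : ℤ)) = A * q ^ k := by
    have h2 : (k + 1).choose 2 = k.choose 2 + k := by
      rw [Nat.choose_succ_succ, Nat.choose_one_right]
      exact Nat.add_comm _ _
    have h3 : (((k + 1).choose 2 : ℤ) - (pSize lam ℓ : ℤ))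
        = ((k.choose 2 : ℤ) - (pSize lam ℓ : ℤ)) + (k : ℤ) := by
      rw [h2]; push_cast; ring
    rw [h3, zpow_add₀ hq0, hA, zpow_natCast]
  have hRHS2 : qHit q m n lam ℓ (k + 1)
      = (A * q ^ k / F0) * ∑ x ∈ Finset.Icc (k + 1) n, qRook q lam ℓ x * D x := by
    rw [qHit, hchoose, ← hF0]
    congr 1
    apply Finset.sum_congr rfl
    intro x _
    rw [hDdef]
    ring
  rw [hLHS, hRHS1, hRHS2]
  -- the remaining purely algebraic identity
  have hsA : ∑ x ∈ Finset.Icc k n, C x * (q ^ x * qInt q ((n : ℤ) - (x : ℤ)) * qRook q lam ℓ x)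
      = C k * (q ^ k * qInt q ((n : ℤ) - (k : ℤ)) * qRook q lam ℓ k)
        + ∑ x ∈ Finset.Icc (k + 1) n, C x *
            (q ^ x * qInt q ((n : ℤ) - (x : ℤ)) * qRook q lam ℓ x) := by
    rw [← Finset.sum_erase_add _ _ (Finset.mem_Icc.mpr ⟨le_refl k, hk⟩),
      Finset.Icc_erase_left, ← Finset.Icc_add_one_left_eq_Ioc]
    ring
  have hsB : ∑ x ∈ Finset.Icc k n, qRook q lam ℓ x * C x
      = qRook q lam ℓ k * C k + ∑ x ∈ Finset.Icc (k + 1) n, qRook q lam ℓ x * C x := by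
    rw [← Finset.sum_erase_add _ _ (Finset.mem_Icc.mpr ⟨le_refl k, hk⟩),
      Finset.Icc_erase_left, ← Finset.Icc_add_one_left_eq_Ioc]
    ring
  rw [hsA, hsB]
  have hper : ∀ x ∈ Finset.Icc (k + 1) n,
      C x * (q ^ x * qInt q ((n : ℤ) - (x : ℤ)) * qRook q lam ℓ x)
        = q ^ k * qInt q ((n : ℤ) - (k : ℤ)) * (qRook q lam ℓ x * C x)
          + q ^ k * qInt q ((k : ℤ) + 1) * (qRook q lam ℓ x * D x) := by
    intro x hx
    rw [Finset.mem_Icc] at hx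
    have key1 := qBinom_step q hq1 (show k < x by omega)
    have key2 : qInt q ((n : ℤ) - (k : ℤ)) - qInt q ((x : ℤ) - (k : ℤ))
        = q ^ ((x : ℤ) - (k : ℤ)) * qInt q ((n : ℤ) - (x : ℤ)) := by
      have := qInt_sub q hq0 ((n : ℤ) - (k : ℤ)) ((x : ℤ) - (k : ℤ))
      rw [this]
      congr 2
      ring
    have key3 : (q : K) ^ k * q ^ ((x : ℤ) - (k : ℤ)) = q ^ x := by
      rw [← zpow_natCast q k, ← zpow_add₀ hq0, ← zpow_natCast q x]
      congr 1
      ring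
    rw [hCdef, hDdef]
    simp only []
    linear_combination (qRook q lam ℓ x * qFact q (m - x) * (-1 : K) ^ (x + k) *
        q ^ ((m : ℤ) * (x : ℤ) - (x.choose 2 : ℤ)) * q ^ k) * key1
      + (-(qRook q lam ℓ x * qFact q (m - x) * (-1 : K) ^ (x + k) *
          q ^ ((m : ℤ) * (x : ℤ) - (x.choose 2 : ℤ)) * qBinom q x k * q ^ k)) * key2
      + (-(qRook q lam ℓ x * qFact q (m - x) * (-1 : K) ^ (x + k) *
          q ^ ((m : ℤ) * (x : ℤ) - (x.choose 2 : ℤ)) * qBinom q x k *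
          qInt q ((n : ℤ) - (x : ℤ)))) * key3
  rw [Finset.sum_congr rfl hper, Finset.sum_add_distrib, ← Finset.mul_sum, ← Finset.mul_sum]
  field_simp
  ring
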